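/- arXiv:1710.05795 — 5 statements merged into one kernel-verified Lean document; each statement's English description precedes it below -/
import Mathlib

section
/- Let J = [a_{i,j}(x)]_{1 ≤ i,j ≤ n} be a tridiagonal n×n matrix whose entries are polynomials in x = (x_1,…,x_m) over ℝ with nonnegative coefficients (so a_{i,j}(x) = 0 whenever |i−j| > 1). Then J is x-totally positive if and only if every consecutive principal minor of J, i.e., every determinant det J[{s, s+1, …, s+k−1}, {s, s+1, …, s+k−1}], is a polynomial in x with nonnegative coefficients. -/
/-!
Expand a minor `J[r, c]` of a tridiagonal `J` along its first row and column. If `r₀` and `c₀`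
differ by at least two, the first row or column vanishes; if they differ by one, the first row or
column has the single nonzero entry `J r₀ c₀`. If `r₀ = c₀ = s`, let `t` be maximal such that `r`
and `c` both begin with `s, s + 1, …, s + t - 1`; then the next row or column index jumps past
`s + t`, so the minor is block triangular with a consecutive principal minor as leading block. In
every case the minor is a product of nonnegative factors and a smaller minor, and induction on the
size concludes.
-/

/-- A multivariable real polynomial is `x`-nonnegative if all of its coefficients
are nonnegative. -/
def PolyNonneg {m : ℕ} (f : MvPolynomial (Fin m) ℝ) : Prop :=
  ∀ d : Fin m →₀ ℕ, 0 ≤ f.coeff d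

/-- A finite matrix of multivariable real polynomials is `x`-totally positive if
every minor (determinant of a submatrix selected by strictly increasing rows and
columns) has all nonnegative coefficients. -/
def xTPfin {m n : ℕ} (J : Matrix (Fin n) (Fin n) (MvPolynomial (Fin m) ℝ)) : Prop :=
  ∀ (k : ℕ) (r c : Fin k → Fin n), StrictMono r → StrictMono c →
    PolyNonneg (Matrix.det (Matrix.of fun i j => J (r i) (c j)))

open Fin

namespace Matrix

variable {R : Type*} [CommRing R] {t u : ℕ}

theorem det_eq_det_castAdd_mul_det_natAdd (M : Matrix (Fin (t + u)) (Fin (t + u)) R)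
    (h : ∀ i j, M (castAdd u i) (natAdd t j) = 0) :
    M.det =
      (M.submatrix (castAdd u) (castAdd u)).det * (M.submatrix (natAdd t) (natAdd t)).det := by
  have h₁₂ : (M.submatrix finSumFinEquiv finSumFinEquiv).toBlocks₁₂ = 0 := by
    ext i j
    exact h i j
  rw [← det_submatrix_equiv_self finSumFinEquiv,
    ← fromBlocks_toBlocks (M.submatrix finSumFinEquiv finSumFinEquiv), h₁₂,
    det_fromBlocks_zero₁₂]
  rfl

theorem det_eq_det_castAdd_mul_det_natAdd' (M : Matrix (Fin (t + u)) (Fin (t + u)) R)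
    (h : ∀ i j, M (natAdd t j) (castAdd u i) = 0) :
    M.det =
      (M.submatrix (castAdd u) (castAdd u)).det * (M.submatrix (natAdd t) (natAdd t)).det := by
  rw [← det_transpose, det_eq_det_castAdd_mul_det_natAdd Mᵀ h, ← transpose_submatrix,
    ← transpose_submatrix, det_transpose, det_transpose]

end Matrix

theorem exists_consecutive_prefix {k n : ℕ} {r c : Fin k → Fin n} (hr : StrictMono r)
    (hc : StrictMono c) (hk : 0 < k) (h0 : r ⟨0, hk⟩ = c ⟨0, hk⟩) :
    ∃ t, 0 < t ∧ t ≤ k ∧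
      (∀ i : Fin k, (i : ℕ) < t → (r i : ℕ) = r ⟨0, hk⟩ + i ∧ (c i : ℕ) = r ⟨0, hk⟩ + i) ∧
      ((∀ j : Fin k, t ≤ (j : ℕ) → (r ⟨0, hk⟩ : ℕ) + t < c j) ∨
        (∀ j : Fin k, t ≤ (j : ℕ) → (r ⟨0, hk⟩ : ℕ) + t < r j)) := by
  set s : ℕ := (r ⟨0, hk⟩ : ℕ)
  set Q : ℕ → Prop := fun t => ∀ i : Fin k, (i : ℕ) < t → (r i : ℕ) = s + i ∧ (c i : ℕ) = s + i
  have hQ₁ : Q 1 := by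
    intro i hi
    obtain rfl : i = ⟨0, hk⟩ := Fin.ext (Nat.lt_one_iff.mp hi)
    exact ⟨rfl, by rw [← h0]; rfl⟩
  obtain ⟨t, ht₀, htk, hQt, hmax⟩ : ∃ t, 0 < t ∧ t ≤ k ∧ Q t ∧ ∀ t', t < t' → t' ≤ k → ¬ Q t' :=
    ⟨_, Nat.le_findGreatest hk hQ₁, Nat.findGreatest_le k, Nat.findGreatest_spec hk hQ₁,
      fun _ => Nat.findGreatest_is_greatest⟩
  refine ⟨t, ht₀, htk, hQt, ?_⟩
  obtain rfl | htk := htk.eq_or_lt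
  · exact .inl fun j hj => absurd j.isLt (by omega)
  have hprev := hQt ⟨t - 1, by omega⟩ (Nat.sub_lt ht₀ Nat.one_pos)
  have hrt : r ⟨t - 1, by omega⟩ < r ⟨t, htk⟩ := hr (Fin.mk_lt_mk.mpr (by omega))
  have hct : c ⟨t - 1, by omega⟩ < c ⟨t, htk⟩ := hc (Fin.mk_lt_mk.mpr (by omega))
  rw [Fin.lt_def] at hrt hct
  dsimp only at hprev
  have hstep : s + t < r ⟨t, htk⟩ ∨ s + t < c ⟨t, htk⟩ := by
    by_contra! hnot
    refine hmax (t + 1) (lt_add_one t) htk fun i hi => ?_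
    rcases (Nat.lt_succ_iff.mp hi).lt_or_eq with hi | hi
    · exact hQt i hi
    · obtain rfl : i = ⟨t, htk⟩ := Fin.ext hi
      dsimp only
      omega
  rcases hstep with h | h
  · exact .inr fun j hj => h.trans_le (hr.monotone (Fin.mk_le_of_le_val hj))
  · exact .inl fun j hj => h.trans_le (hc.monotone (Fin.mk_le_of_le_val hj))

def MvPolynomial.nonnegCoeffs (σ : Type*) : Subsemiring (MvPolynomial σ ℝ) where
  carrier := {f | ∀ d, 0 ≤ f.coeff d}
  zero_mem' d := (MvPolynomial.coeff_zero d).ge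
  one_mem' d := by
    classical
    rw [MvPolynomial.coeff_one]
    split_ifs <;> norm_num
  add_mem' hf hg d := by
    rw [MvPolynomial.coeff_add]
    exact add_nonneg (hf d) (hg d)
  mul_mem' hf hg d := by
    classical
    rw [MvPolynomial.coeff_mul]
    exact Finset.sum_nonneg fun p _ => mul_nonneg (hf _) (hg _)

section Tridiagonal

open Matrix

variable {R : Type*} [CommRing R] (S : Subsemiring R) {n : ℕ}

def Matrix.IsTridiagonal (J : Matrix (Fin n) (Fin n) R) : Prop :=
  ∀ i j : Fin n, ((i : ℕ) + 1 < (j : ℕ) ∨ (j : ℕ) + 1 < (i : ℕ)) → J i j = 0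

def Matrix.ConsecutivePrincipalMinorsMem (J : Matrix (Fin n) (Fin n) R) : Prop :=
  ∀ (s k : ℕ) (h : s + k ≤ n), (J.submatrix (castLE h ∘ natAdd s) (castLE h ∘ natAdd s)).det ∈ S

def Matrix.MinorsMem (J : Matrix (Fin n) (Fin n) R) (k : ℕ) : Prop :=
  ∀ r c : Fin k → Fin n, StrictMono r → StrictMono c → (J.submatrix r c).det ∈ S

variable {S} {J : Matrix (Fin n) (Fin n) R}

theorem det_submatrix_mem_of_consecutive
    (hcons : J.ConsecutivePrincipalMinorsMem S)
    {k : ℕ} (r c : Fin k → Fin n) (s : ℕ) (hr : ∀ i, (r i : ℕ) = s + i)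
    (hc : ∀ i, (c i : ℕ) = s + i) : (J.submatrix r c).det ∈ S := by
  rcases Nat.eq_zero_or_pos k with rfl | hk
  · rw [det_isEmpty]
    exact one_mem S
  have hsk : s + k ≤ n := by
    have hlast := (r ⟨k - 1, by omega⟩).isLt
    rw [hr, Fin.val_mk] at hlast
    omega
  obtain rfl : r = castLE hsk ∘ natAdd s := funext fun i => Fin.ext (by simp [hr])
  obtain rfl : c = castLE hsk ∘ natAdd s := funext fun i => Fin.ext (by simp [hc])
  exact hcons s k hsk

theorem det_submatrix_mem_of_separated (htri : J.IsTridiagonal) {t u : ℕ}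
    (r c : Fin (t + u) → Fin n)
    (hsep : (∀ i j, (r (castAdd u i) : ℕ) + 1 < c (natAdd t j)) ∨
      (∀ i j, (c (castAdd u i) : ℕ) + 1 < r (natAdd t j)))
    (htop : (J.submatrix (r ∘ castAdd u) (c ∘ castAdd u)).det ∈ S)
    (hbot : (J.submatrix (r ∘ natAdd t) (c ∘ natAdd t)).det ∈ S) :
    (J.submatrix r c).det ∈ S := by
  have hsplit : (J.submatrix r c).det =
      (J.submatrix (r ∘ castAdd u) (c ∘ castAdd u)).det *
        (J.submatrix (r ∘ natAdd t) (c ∘ natAdd t)).det := by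
    rcases hsep with h | h
    · exact det_eq_det_castAdd_mul_det_natAdd _ fun i j => htri _ _ (.inl (h i j))
    · exact det_eq_det_castAdd_mul_det_natAdd' _ fun i j => htri _ _ (.inr (h i j))
  rw [hsplit]
  exact mul_mem htop hbot

theorem det_submatrix_eq_zero_of_head_far (htri : J.IsTridiagonal) {k : ℕ}
    {r c : Fin k → Fin n} (hr : Monotone r) (hc : Monotone c) (hk : 0 < k)
    (hfar : (r ⟨0, hk⟩ : ℕ) + 1 < c ⟨0, hk⟩ ∨ (c ⟨0, hk⟩ : ℕ) + 1 < r ⟨0, hk⟩) :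
    (J.submatrix r c).det = 0 := by
  have hhead : ∀ i : Fin k, (⟨0, hk⟩ : Fin k) ≤ i := fun i => Nat.zero_le i
  rcases hfar with h | h
  · refine det_eq_zero_of_row_eq_zero ⟨0, hk⟩ fun j => htri _ _ (.inl ?_)
    exact h.trans_le (hc (hhead j))
  · refine det_eq_zero_of_column_eq_zero ⟨0, hk⟩ fun i => htri _ _ (.inr ?_)
    exact h.trans_le (hr (hhead i))

theorem det_submatrix_mem_of_head_adjacent (hJ : ∀ i j, J i j ∈ S) (htri : J.IsTridiagonal)
    {k : ℕ} {r c : Fin k → Fin n} (hr : StrictMono r) (hc : StrictMono c) (hk : 0 < k)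
    (hadj : (c ⟨0, hk⟩ : ℕ) = r ⟨0, hk⟩ + 1 ∨ (r ⟨0, hk⟩ : ℕ) = c ⟨0, hk⟩ + 1)
    (IH : ∀ u < k, J.MinorsMem S u) : (J.submatrix r c).det ∈ S := by
  obtain ⟨u, rfl⟩ : ∃ u, k = 1 + u := ⟨k - 1, by omega⟩
  have hhead (i : Fin 1) : castAdd u i = ⟨0, hk⟩ := Fin.ext (Nat.lt_one_iff.mp i.isLt)
  have htail (j : Fin u) : (⟨0, hk⟩ : Fin (1 + u)) < natAdd 1 j := Fin.mk_lt_mk.mpr (by omega)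
  refine det_submatrix_mem_of_separated htri r c ?_ ?_
    (IH u (by omega) _ _ (hr.comp (strictMono_natAdd 1)) (hc.comp (strictMono_natAdd 1)))
  · rcases hadj with h | h
    · exact .inl fun i j => by have := Fin.lt_def.mp (hc (htail j)); rw [hhead]; omega
    · exact .inr fun i j => by have := Fin.lt_def.mp (hr (htail j)); rw [hhead]; omega
  · rw [det_unique]
    exact hJ _ _

theorem det_submatrix_mem_of_head_eq (htri : J.IsTridiagonal)
    (hcons : J.ConsecutivePrincipalMinorsMem S)
    {k : ℕ} {r c : Fin k → Fin n} (hr : StrictMono r) (hc : StrictMono c) (hk : 0 < k)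
    (h0 : r ⟨0, hk⟩ = c ⟨0, hk⟩) (IH : ∀ u < k, J.MinorsMem S u) :
    (J.submatrix r c).det ∈ S := by
  obtain ⟨t, ht₀, htk, hpre, hsep⟩ := exists_consecutive_prefix hr hc hk h0
  obtain ⟨u, rfl⟩ := Nat.exists_eq_add_of_le htk
  have hpre' (i : Fin t) : (r (castAdd u i) : ℕ) = r ⟨0, hk⟩ + i ∧
      (c (castAdd u i) : ℕ) = r ⟨0, hk⟩ + i :=
    hpre (castAdd u i) i.isLt
  have hpost (j : Fin u) : t ≤ (natAdd t j : ℕ) := Nat.le_add_right t j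
  refine det_submatrix_mem_of_separated htri r c ?_
    (det_submatrix_mem_of_consecutive hcons _ _ _ (fun i => (hpre' i).1) fun i => (hpre' i).2)
    (IH u (by omega) _ _ (hr.comp (strictMono_natAdd t)) (hc.comp (strictMono_natAdd t)))
  rcases hsep with h | h
  · exact .inl fun i j => by have := hpre' i; have := h _ (hpost j); omega
  · exact .inr fun i j => by have := hpre' i; have := h _ (hpost j); omega

theorem minorsMem_of_isTridiagonal (hJ : ∀ i j, J i j ∈ S) (htri : J.IsTridiagonal)
    (hcons : J.ConsecutivePrincipalMinorsMem S)
    (k : ℕ) : J.MinorsMem S k := by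
  induction k using Nat.strong_induction_on with
  | _ k IH =>
  intro r c hr hc
  rcases Nat.eq_zero_or_pos k with rfl | hk
  · rw [det_isEmpty]
    exact one_mem S
  obtain hfar | hadj | heq :
      ((r ⟨0, hk⟩ : ℕ) + 1 < c ⟨0, hk⟩ ∨ (c ⟨0, hk⟩ : ℕ) + 1 < r ⟨0, hk⟩) ∨
      ((c ⟨0, hk⟩ : ℕ) = r ⟨0, hk⟩ + 1 ∨ (r ⟨0, hk⟩ : ℕ) = c ⟨0, hk⟩ + 1) ∨
      r ⟨0, hk⟩ = c ⟨0, hk⟩ := by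
    rw [Fin.ext_iff]
    omega
  · rw [det_submatrix_eq_zero_of_head_far htri hr.monotone hc.monotone hk hfar]
    exact zero_mem S
  · exact det_submatrix_mem_of_head_adjacent hJ htri hr hc hk hadj IH
  · exact det_submatrix_mem_of_head_eq htri hcons hr hc hk heq IH

end Tridiagonal

/-- A tridiagonal matrix of polynomials with nonnegative coefficients is
`x`-totally positive iff all of its consecutive principal minors have
nonnegative coefficients. -/
theorem tridiagonal_xTP_iff_consecutive_principal_minors
    {m n : ℕ} (J : Matrix (Fin n) (Fin n) (MvPolynomial (Fin m) ℝ))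
    (hnn : ∀ i j, PolyNonneg (J i j))
    (htri : ∀ i j : Fin n, ((i : ℕ) + 1 < (j : ℕ) ∨ (j : ℕ) + 1 < (i : ℕ)) → J i j = 0) :
    xTPfin J ↔
      (∀ (s k : ℕ) (h : s + k ≤ n),
        PolyNonneg (Matrix.det (Matrix.of fun i j : Fin k =>
          J ⟨s + (i : ℕ), lt_of_lt_of_le (Nat.add_lt_add_left i.isLt s) h⟩
            ⟨s + (j : ℕ), lt_of_lt_of_le (Nat.add_lt_add_left j.isLt s) h⟩))) := by
  constructor
  · intro hTP s k h
    exact hTP k _ _ ((strictMono_castLE h).comp (strictMono_natAdd s))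
      ((strictMono_castLE h).comp (strictMono_natAdd s))
  · exact fun hcons k =>
      minorsMem_of_isTridiagonal (S := MvPolynomial.nonnegCoeffs (Fin m)) hnn htri hcons k
end

section
/- Let J(x) be the infinite tridiagonal matrix with diagonal entries s_0(x), s_1(x), s_2(x), …, superdiagonal entries r_1(x), r_2(x), …, and subdiagonal entries t_1(x), t_2(x), …, where all s_i(x), r_i(x), t_i(x) are polynomials in x = (x_1,…,x_m) over ℝ with nonnegative coefficients. If (i) s_0(x) − 1 ≥_x 0, (ii) s_i(x)·s_{i+1}(x) − t_{i+1}(x)·r_{i+1}(x) ≥_x 0 for all i ≥ 0, and (iii) s_{i+1}(x) − t_{i+1}(x)·r_{i+1}(x) − 1 ≥_x 0 for all i ≥ 0, then J(x) is x-totally positive. -/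
/-- An infinite matrix of multivariable real polynomials is `x`-totally positive if
every minor (determinant of a submatrix selected by strictly increasing rows and
columns) has all nonnegative coefficients. -/
def xTP {m : ℕ} (M : ℕ → ℕ → MvPolynomial (Fin m) ℝ) : Prop :=
  ∀ (k : ℕ) (r c : Fin k → ℕ), StrictMono r → StrictMono c →
    PolyNonneg (Matrix.det (Matrix.of fun i j => M (r i) (c j)))

/-!
Write `D` for a minor of the tridiagonal matrix `T` with increasing rows `ρ` and columns `γ`, and
`D₁`, `D₂` for the minors obtained by dropping its last one or two rows and columns. Expanding
along the last row or column gives `D = T (ρ last) (γ last) * D₁` when `ρ last ≠ γ last`, and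
`D = s N * D₁ - T N γₚ * T ρₚ N * D₂` when `ρ last = γ last = N`, where `ρₚ`, `γₚ` are the
penultimate indices. The induction therefore carries a second statement: when `ρ last = γ last`,
`D - D₁` is nonnegative as well. Only closure of the nonnegative-coefficient polynomials under
sums and products matters, so any subsemiring `S` of a commutative ring can take their place.
-/

namespace Matrix

variable {R : Type*} [CommRing R] {n : ℕ}

theorem det_succ_of_last_row_eq_zero (A : Matrix (Fin (n + 1)) (Fin (n + 1)) R)
    (h : ∀ j, j ≠ Fin.last n → A (Fin.last n) j = 0) :
    A.det = A (Fin.last n) (Fin.last n) * (A.submatrix Fin.castSucc Fin.castSucc).det := by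
  rw [det_succ_row A (Fin.last n),
    Finset.sum_eq_single (Fin.last n) (fun j _ hj => by simp [h j hj]) (by simp)]
  simp [Fin.succAbove_last, ← two_mul]

theorem det_succ_of_last_col_eq_zero (A : Matrix (Fin (n + 1)) (Fin (n + 1)) R)
    (h : ∀ i, i ≠ Fin.last n → A i (Fin.last n) = 0) :
    A.det = A (Fin.last n) (Fin.last n) * (A.submatrix Fin.castSucc Fin.castSucc).det := by
  rw [← det_transpose, det_succ_of_last_row_eq_zero Aᵀ h, ← transpose_submatrix,
    det_transpose, transpose_apply]

theorem det_succ_succ_of_last_row_col_eq_zero (A : Matrix (Fin (n + 2)) (Fin (n + 2)) R)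
    (hrow : ∀ j : Fin n, A (Fin.last (n + 1)) j.castSucc.castSucc = 0)
    (hcol : ∀ i : Fin n, A i.castSucc.castSucc (Fin.last (n + 1)) = 0) :
    A.det = A (Fin.last (n + 1)) (Fin.last (n + 1)) *
        (A.submatrix Fin.castSucc Fin.castSucc).det -
      A (Fin.last (n + 1)) (Fin.last n).castSucc * A (Fin.last n).castSucc (Fin.last (n + 1)) *
        (A.submatrix (Fin.castSucc ∘ Fin.castSucc) (Fin.castSucc ∘ Fin.castSucc)).det := by
  have hminor : (A.submatrix Fin.castSucc (Fin.last n).castSucc.succAbove).det =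
      A (Fin.last n).castSucc (Fin.last (n + 1)) *
        (A.submatrix (Fin.castSucc ∘ Fin.castSucc) (Fin.castSucc ∘ Fin.castSucc)).det := by
    rw [det_succ_of_last_col_eq_zero]
    · simp [Fin.succAbove_castSucc_of_lt _ _ (Fin.castSucc_lt_last _), submatrix_submatrix,
        Function.comp_def]
    · intro i hi
      obtain ⟨i, rfl⟩ := Fin.exists_castSucc_eq.mpr hi
      simpa using hcol i
  rw [det_succ_row A (Fin.last (n + 1)), Fin.sum_univ_castSucc, Fin.sum_univ_castSucc,
    Finset.sum_eq_zero fun j _ => by simp [hrow j], Fin.succAbove_last, hminor]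
  simp [← two_mul]
  ring

end Matrix

section Tridiagonal

variable {R : Type*} [CommRing R]

def tridiag (s r t : ℕ → R) (a b : ℕ) : R :=
  if a = b then s a else if b = a + 1 then r b else if a = b + 1 then t a else 0

def minor (M : ℕ → ℕ → R) {k : ℕ} (ρ γ : Fin k → ℕ) : R :=
  (Matrix.of fun i j => M (ρ i) (γ j)).det

variable {s r t : ℕ → R} {a b : ℕ}

theorem tridiag_self (a : ℕ) : tridiag s r t a a = s a := if_pos rfl

theorem tridiag_of_eq_add_one_right (h : b = a + 1) : tridiag s r t a b = r b := by
  unfold tridiag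
  split_ifs <;> first | rfl | omega

theorem tridiag_of_eq_add_one_left (h : a = b + 1) : tridiag s r t a b = t a := by
  unfold tridiag
  split_ifs <;> first | rfl | omega

theorem tridiag_eq_zero (h : a + 2 ≤ b ∨ b + 2 ≤ a) : tridiag s r t a b = 0 := by
  unfold tridiag
  split_ifs <;> first | rfl | omega

theorem tridiag_mem {S : Subsemiring R} (hs : ∀ i, s i ∈ S) (hr : ∀ i, r i ∈ S)
    (ht : ∀ i, t i ∈ S) (a b : ℕ) : tridiag s r t a b ∈ S := by
  unfold tridiag
  split_ifs
  exacts [hs a, hr b, ht a, zero_mem S]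

variable {k : ℕ} {ρ γ : Fin (k + 1) → ℕ}

theorem minor_tridiag_of_lt (hρ : StrictMono ρ) (h : ρ (Fin.last k) < γ (Fin.last k)) :
    minor (tridiag s r t) ρ γ =
      tridiag s r t (ρ (Fin.last k)) (γ (Fin.last k)) *
        minor (tridiag s r t) (Fin.init ρ) (Fin.init γ) := by
  refine Matrix.det_succ_of_last_col_eq_zero _ fun i hi => tridiag_eq_zero (.inl ?_)
  have := hρ (Fin.lt_last_iff_ne_last.mpr hi)
  omega

theorem minor_tridiag_of_gt (hγ : StrictMono γ) (h : γ (Fin.last k) < ρ (Fin.last k)) :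
    minor (tridiag s r t) ρ γ =
      tridiag s r t (ρ (Fin.last k)) (γ (Fin.last k)) *
        minor (tridiag s r t) (Fin.init ρ) (Fin.init γ) := by
  refine Matrix.det_succ_of_last_row_eq_zero _ fun j hj => tridiag_eq_zero (.inr ?_)
  have := hγ (Fin.lt_last_iff_ne_last.mpr hj)
  omega

theorem minor_tridiag_of_eq {ρ γ : Fin (k + 2) → ℕ} (hρ : StrictMono ρ) (hγ : StrictMono γ)
    (h : ρ (Fin.last (k + 1)) = γ (Fin.last (k + 1))) :
    minor (tridiag s r t) ρ γ =
      s (ρ (Fin.last (k + 1))) * minor (tridiag s r t) (Fin.init ρ) (Fin.init γ) -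
        tridiag s r t (ρ (Fin.last (k + 1))) (Fin.init γ (Fin.last k)) *
          tridiag s r t (Fin.init ρ (Fin.last k)) (ρ (Fin.last (k + 1))) *
          minor (tridiag s r t) (Fin.init (Fin.init ρ)) (Fin.init (Fin.init γ)) := by
  have hρp := hρ (Fin.castSucc_lt_last (Fin.last k))
  have hγp := hγ (Fin.castSucc_lt_last (Fin.last k))
  rw [minor, Matrix.det_succ_succ_of_last_row_col_eq_zero]
  · simp only [Matrix.of_apply, ← h, tridiag_self]
    rfl
  · intro j
    have := hγ (Fin.castSucc_lt_castSucc_iff.mpr (Fin.castSucc_lt_last j))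
    exact tridiag_eq_zero (.inr (by omega))
  · intro i
    have := hρ (Fin.castSucc_lt_castSucc_iff.mpr (Fin.castSucc_lt_last i))
    exact tridiag_eq_zero (.inl (by omega))

end Tridiagonal

theorem StrictMono.fin_init {α : Type*} [Preorder α] {n : ℕ} {f : Fin (n + 1) → α}
    (hf : StrictMono f) : StrictMono (Fin.init f) :=
  hf.comp Fin.strictMono_castSucc

section TotalPositivity

variable {R : Type*} [CommRing R] (S : Subsemiring R) {s r t : ℕ → R}
  (hr : ∀ i, r i ∈ S) (ht : ∀ i, t i ∈ S) (h0 : s 0 - 1 ∈ S)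
  (h2 : ∀ i, s (i + 1) - t (i + 1) * r (i + 1) - 1 ∈ S)

include hr ht h0 h2

theorem sub_one_mem_of_tridiag_conditions (i : ℕ) : s i - 1 ∈ S := by
  cases i with
  | zero => exact h0
  | succ i =>
    rw [show s (i + 1) - 1 = (s (i + 1) - t (i + 1) * r (i + 1) - 1) + t (i + 1) * r (i + 1) by
      ring]
    exact add_mem (h2 i) (mul_mem (ht _) (hr _))

theorem minor_tridiag_mem_succ {k : ℕ}
    (hmem : ∀ ρ γ : Fin k → ℕ, StrictMono ρ → StrictMono γ → minor (tridiag s r t) ρ γ ∈ S)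
    (hsub : ∀ ρ γ : Fin (k + 1) → ℕ, StrictMono ρ → StrictMono γ →
      ρ (Fin.last k) = γ (Fin.last k) →
      minor (tridiag s r t) ρ γ - minor (tridiag s r t) (Fin.init ρ) (Fin.init γ) ∈ S)
    {ρ γ : Fin (k + 1) → ℕ} (hρ : StrictMono ρ) (hγ : StrictMono γ) :
    minor (tridiag s r t) ρ γ ∈ S := by
  have hs i : s i ∈ S := by
    simpa using add_mem (sub_one_mem_of_tridiag_conditions S hr ht h0 h2 i) (one_mem S)
  have hinit := hmem _ _ hρ.fin_init hγ.fin_init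
  rcases lt_trichotomy (ρ (Fin.last k)) (γ (Fin.last k)) with hlt | heq | hgt
  · rw [minor_tridiag_of_lt hρ hlt]
    exact mul_mem (tridiag_mem hs hr ht _ _) hinit
  · simpa only [sub_add_cancel] using add_mem (hsub ρ γ hρ hγ heq) hinit
  · rw [minor_tridiag_of_gt hγ hgt]
    exact mul_mem (tridiag_mem hs hr ht _ _) hinit

theorem minor_tridiag_sub_mem_succ {k : ℕ}
    (hmem : ∀ ρ γ : Fin (k + 1) → ℕ, StrictMono ρ → StrictMono γ →
      minor (tridiag s r t) ρ γ ∈ S)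
    (hsub : ∀ ρ γ : Fin (k + 1) → ℕ, StrictMono ρ → StrictMono γ →
      ρ (Fin.last k) = γ (Fin.last k) →
      minor (tridiag s r t) ρ γ - minor (tridiag s r t) (Fin.init ρ) (Fin.init γ) ∈ S)
    {ρ γ : Fin (k + 2) → ℕ} (hρ : StrictMono ρ) (hγ : StrictMono γ)
    (h : ρ (Fin.last (k + 1)) = γ (Fin.last (k + 1))) :
    minor (tridiag s r t) ρ γ - minor (tridiag s r t) (Fin.init ρ) (Fin.init γ) ∈ S := by
  have hinit := hmem _ _ hρ.fin_init hγ.fin_init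
  rw [minor_tridiag_of_eq hρ hγ h]
  set N := ρ (Fin.last (k + 1))
  set D₁ := minor (tridiag s r t) (Fin.init ρ) (Fin.init γ)
  set D₂ := minor (tridiag s r t) (Fin.init (Fin.init ρ)) (Fin.init (Fin.init γ))
  have hρp : Fin.init ρ (Fin.last k) < N := hρ (Fin.castSucc_lt_last _)
  have hγp : Fin.init γ (Fin.last k) < N := h ▸ hγ (Fin.castSucc_lt_last _)
  by_cases hadj : Fin.init ρ (Fin.last k) + 1 = N ∧ Fin.init γ (Fin.last k) + 1 = N
  · obtain ⟨hρN, hγN⟩ := hadj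
    rw [tridiag_of_eq_add_one_left hγN.symm, tridiag_of_eq_add_one_right hρN.symm]
    have hcoeff : s N - t N * r N - 1 ∈ S := hρN ▸ h2 _
    have hdiff : D₁ - D₂ ∈ S := hsub _ _ hρ.fin_init hγ.fin_init (by omega)
    rw [show s N * D₁ - t N * r N * D₂ - D₁ = (s N - t N * r N - 1) * D₁ + t N * r N * (D₁ - D₂) by
      ring]
    exact add_mem (mul_mem hcoeff hinit) (mul_mem (mul_mem (ht N) (hr N)) hdiff)
  · have hzero : tridiag s r t N (Fin.init γ (Fin.last k)) *
        tridiag s r t (Fin.init ρ (Fin.last k)) N = 0 := by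
      rcases not_and_or.mp hadj with hρN | hγN
      · rw [tridiag_eq_zero (a := Fin.init ρ (Fin.last k)) (.inl (by omega)), mul_zero]
      · rw [tridiag_eq_zero (b := Fin.init γ (Fin.last k)) (.inr (by omega)), zero_mul]
    rw [hzero, zero_mul, sub_zero, ← sub_one_mul]
    exact mul_mem (sub_one_mem_of_tridiag_conditions S hr ht h0 h2 N) hinit

theorem minor_tridiag_mem {k : ℕ} {ρ γ : Fin k → ℕ} (hρ : StrictMono ρ) (hγ : StrictMono γ) :
    minor (tridiag s r t) ρ γ ∈ S := by
  suffices key : ∀ k, (∀ ρ γ : Fin k → ℕ, StrictMono ρ → StrictMono γ →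
      minor (tridiag s r t) ρ γ ∈ S) ∧
      ∀ ρ γ : Fin (k + 1) → ℕ, StrictMono ρ → StrictMono γ → ρ (Fin.last k) = γ (Fin.last k) →
        minor (tridiag s r t) ρ γ - minor (tridiag s r t) (Fin.init ρ) (Fin.init γ) ∈ S from
    (key k).1 ρ γ hρ hγ
  intro k
  induction k with
  | zero =>
    refine ⟨fun _ _ _ _ => by simp [minor], fun ρ γ _ _ (h : ρ 0 = γ 0) => ?_⟩
    simpa [minor, ← h, tridiag_self] using sub_one_mem_of_tridiag_conditions S hr ht h0 h2 (ρ 0)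
  | succ k ih =>
    have hmem ρ γ (hρ : StrictMono ρ) (hγ : StrictMono γ) :=
      minor_tridiag_mem_succ S hr ht h0 h2 ih.1 ih.2 (ρ := ρ) (γ := γ) hρ hγ
    exact ⟨hmem, fun _ _ hρ hγ h => minor_tridiag_sub_mem_succ S hr ht h0 h2 hmem ih.2 hρ hγ h⟩

end TotalPositivity

namespace MvPolynomial

def nonnegCoeffs_s1 (σ R : Type*) [CommSemiring R] [PartialOrder R] [IsOrderedRing R] :
    Subsemiring (MvPolynomial σ R) where
  carrier := {f | ∀ d, 0 ≤ f.coeff d}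
  mul_mem' {f g} hf hg d := by
    classical
    rw [coeff_mul]
    exact Finset.sum_nonneg fun x _ => mul_nonneg (hf _) (hg _)
  one_mem' d := by
    classical
    rw [coeff_one]
    split_ifs <;> simp
  add_mem' hf hg d := add_nonneg (hf d) (hg d)
  zero_mem' _ := le_rfl

end MvPolynomial

theorem tridiagonal_xTP_of_conditions_general {m : ℕ}
    (s r t : ℕ → MvPolynomial (Fin m) ℝ)
    (hr : ∀ i, PolyNonneg (r i)) (ht : ∀ i, PolyNonneg (t i))
    (h0 : PolyNonneg (s 0 - 1))
    (h2 : ∀ i, PolyNonneg (s (i + 1) - t (i + 1) * r (i + 1) - 1)) :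
    xTP (fun a b =>
      if a = b then s a
      else if b = a + 1 then r b
      else if a = b + 1 then t a
      else 0) :=
  fun _ _ _ hρ hγ => minor_tridiag_mem (MvPolynomial.nonnegCoeffs_s1 (Fin m) ℝ) hr ht h0 h2 hρ hγ

/-- Lemma 2.2: sufficient conditions for an infinite tridiagonal matrix of
polynomials with nonnegative coefficients to be `x`-totally positive. -/
theorem tridiagonal_xTP_of_conditions {m : ℕ}
    (s r t : ℕ → MvPolynomial (Fin m) ℝ)
    (hs : ∀ i, PolyNonneg (s i)) (hr : ∀ i, PolyNonneg (r i)) (ht : ∀ i, PolyNonneg (t i))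
    (h0 : PolyNonneg (s 0 - 1))
    (h1 : ∀ i, PolyNonneg (s i * s (i + 1) - t (i + 1) * r (i + 1)))
    (h2 : ∀ i, PolyNonneg (s (i + 1) - t (i + 1) * r (i + 1) - 1)) :
    xTP (fun a b =>
      if a = b then s a
      else if b = a + 1 then r b
      else if a = b + 1 then t a
      else 0) :=
  tridiagonal_xTP_of_conditions_general s r t hr ht h0 h2
end

section
/- Let (s_i(x))_{i ≥ 0} and (t_{i+1}(x))_{i ≥ 0} be sequences of polynomials in ℝ[x_1,…,x_m], and define polynomials m_{n,k}(x) by m_{0,0}(x) = 1, m_{n,k}(x) = 0 unless 0 ≤ k ≤ n, and m_{n+1,k}(x) = m_{n,k−1}(x) + s_k(x)·m_{n,k}(x) + t_{k+1}(x)·m_{n,k+1}(x). Let T_0(x) = 1 and T_k(x) = t_1(x)·t_2(x)⋯t_k(x) for k ≥ 1. Then the Hankel matrix of the sequence (m_{n,0}(x))_{n ≥ 0} factors as H(x) = M(x)·T(x)·M(x)^t where M(x) = [m_{i,j}(x)]_{i,j ≥ 0} and T(x) = diag(T_0(x), T_1(x), T_2(x), …); equivalently, for all i, j ≥ 0, m_{i+j,0}(x)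 = Σ_{k ≥ 0} m_{i,k}(x)·T_k(x)·m_{j,k}(x). -/
/-!
With `T_k = t_1 ⋯ t_k`, the recurrence says that row `n + 1` of `M` is row `n` acted on by a
tridiagonal operator which is symmetric for the weighted pairing `⟨u, v⟩ = Σ_k u_k T_k v_k`,
because `T_{k+1} = T_k t_{k+1}`. Hence `⟨M_{i+1}, M_j⟩ = ⟨M_i, M_{j+1}⟩`, so `⟨M_i, M_j⟩` depends
only on `i + j`, and it equals `m_{i+j,0}` at `i = 0` since row `0` is the unit vector `e_0`.
-/

open Finset

variable {R : Type*} [CommSemiring R]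

def jacobiWeight (t : ℕ → R) (k : ℕ) : R := ∏ l ∈ range k, t (l + 1)

@[simp]
lemma jacobiWeight_zero (t : ℕ → R) : jacobiWeight t 0 = 1 := prod_range_zero _

lemma jacobiWeight_succ (t : ℕ → R) (k : ℕ) :
    jacobiWeight t (k + 1) = jacobiWeight t k * t (k + 1) :=
  prod_range_succ _ _

/-- The right-hand side is symmetric in `u` and `v` (up to commutativity): this is the
self-adjointness of one step of the recurrence for the weights `T_k`. -/
lemma sum_jacobi_step_mul_weight_mul (s t v w u : ℕ → R) (N : ℕ)
    (hw0 : w 0 = s 0 * v 0 + t 1 * v 1)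
    (hw : ∀ k, w (k + 1) = v k + s (k + 1) * v (k + 1) + t (k + 2) * v (k + 2))
    (hvN : v (N + 1) = 0) :
    ∑ k ∈ range (N + 1), w k * jacobiWeight t k * u k =
      ∑ k ∈ range (N + 1), s k * jacobiWeight t k * (v k * u k) +
        ∑ k ∈ range N, jacobiWeight t (k + 1) * (v k * u (k + 1) + v (k + 1) * u k) := by
  have hdown : ∑ k ∈ range N, jacobiWeight t (k + 1) * (v (k + 1) * u k) =
      t 1 * (v 1 * u 0) +
        ∑ k ∈ range N, t (k + 2) * jacobiWeight t (k + 1) * (v (k + 2) * u (k + 1)) := by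
    have htail := sum_range_succ (fun k => jacobiWeight t (k + 1) * (v (k + 1) * u k)) N
    rw [hvN, zero_mul, mul_zero, add_zero] at htail
    rw [← htail, sum_range_succ', add_comm]
    simp only [jacobiWeight_succ t (_ + 1), jacobiWeight_succ t 0, jacobiWeight_zero]
    congr 1
    · ring
    · exact sum_congr rfl fun k _ => by ring
  rw [sum_range_succ', sum_range_succ' (fun k => s k * _ * _)]
  simp only [mul_add, sum_add_distrib, hdown, hw, hw0, jacobiWeight_zero, add_mul]
  simp only [mul_comm, mul_left_comm]
  ring

section RecursiveMatrix

variable {s t : ℕ → R} {M : ℕ → ℕ → R}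

lemma sum_succ_left_eq_sum_succ_right
    (hMzero : ∀ n k, n < k → M n k = 0)
    (hMrec0 : ∀ n, M (n + 1) 0 = s 0 * M n 0 + t 1 * M n 1)
    (hMrec : ∀ n k, M (n + 1) (k + 1) =
      M n k + s (k + 1) * M n (k + 1) + t (k + 2) * M n (k + 2))
    {i j N : ℕ} (hi : i ≤ N) (hj : j ≤ N) :
    ∑ k ∈ range (N + 1), M (i + 1) k * jacobiWeight t k * M j k =
      ∑ k ∈ range (N + 1), M i k * jacobiWeight t k * M (j + 1) k := by
  have hswap : ∑ k ∈ range (N + 1), M i k * jacobiWeight t k * M (j + 1) k =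
      ∑ k ∈ range (N + 1), M (j + 1) k * jacobiWeight t k * M i k :=
    sum_congr rfl fun k _ => by ring
  rw [hswap,
    sum_jacobi_step_mul_weight_mul s t (M i) (M (i + 1)) (M j) N (hMrec0 i) (hMrec i)
      (hMzero i _ (by omega)),
    sum_jacobi_step_mul_weight_mul s t (M j) (M (j + 1)) (M i) N (hMrec0 j) (hMrec j)
      (hMzero j _ (by omega))]
  congr 1
  · exact sum_congr rfl fun k _ => by ring
  · exact sum_congr rfl fun k _ => by ring

lemma sum_row_zero_mul_weight_mul (hM00 : M 0 0 = 1) (hMzero : ∀ n k, n < k → M n k = 0)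
    (j N : ℕ) :
    ∑ k ∈ range (N + 1), M 0 k * jacobiWeight t k * M j k = M j 0 := by
  rw [sum_range_succ']
  simp [hM00, fun k => hMzero 0 (k + 1) k.succ_pos]

lemma apply_add_zero_eq_sum (hM00 : M 0 0 = 1) (hMzero : ∀ n k, n < k → M n k = 0)
    (hMrec0 : ∀ n, M (n + 1) 0 = s 0 * M n 0 + t 1 * M n 1)
    (hMrec : ∀ n k, M (n + 1) (k + 1) =
      M n k + s (k + 1) * M n (k + 1) + t (k + 2) * M n (k + 2))
    (i j N : ℕ) (hN : i + j ≤ N) :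
    M (i + j) 0 = ∑ k ∈ range (N + 1), M i k * jacobiWeight t k * M j k := by
  induction i generalizing j with
  | zero => rw [zero_add, sum_row_zero_mul_weight_mul hM00 hMzero]
  | succ i ih =>
    rw [sum_succ_left_eq_sum_succ_right hMzero hMrec0 hMrec (by omega) (by omega),
      ← ih (j + 1) (by omega), Nat.add_right_comm, add_assoc]

end RecursiveMatrix

/-- The Hankel matrix of the first column of a recursive matrix factors as
`H = M T Mᵗ`: entrywise, `m_{i+j,0} = Σ_k m_{i,k} T_k m_{j,k}` where
`T_k = t_1 t_2 ⋯ t_k`. -/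
theorem hankel_factorization {m : ℕ}
    (s t : ℕ → MvPolynomial (Fin m) ℝ)
    (M : ℕ → ℕ → MvPolynomial (Fin m) ℝ)
    (hM00 : M 0 0 = 1)
    (hMzero : ∀ n k, n < k → M n k = 0)
    (hMrec0 : ∀ n, M (n + 1) 0 = s 0 * M n 0 + t 1 * M n 1)
    (hMrec : ∀ n k, M (n + 1) (k + 1) =
      M n k + s (k + 1) * M n (k + 1) + t (k + 2) * M n (k + 2)) :
    ∀ i j, M (i + j) 0 =
      ∑ k ∈ Finset.range (min i j + 1),
        M i k * (∏ l ∈ Finset.range k, t (l + 1)) * M j k := by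
  intro i j
  rw [apply_add_zero_eq_sum hM00 hMzero hMrec0 hMrec i j (i + j) le_rfl]
  refine (sum_subset (range_subset_range.mpr (by omega)) fun k _ hk => ?_).symm
  rw [mem_range, not_lt] at hk
  rcases le_or_gt k i with hki | hik
  · rw [hMzero j k (by omega), mul_zero]
  · rw [hMzero i k hik, zero_mul, zero_mul]
end

section
/- Suppose α = (a_0(x), a_1(x), a_2(x), …) is a Stieltjes moment sequence of polynomials in ℝ[x_1,…,x_m] such that deg(a_n(x)) = n for all n ≥ 0. Then the sequence of homogenizations H_{x_0}(α) = (H_{x_0}(a_0(x)), H_{x_0}(a_1(x)), …), where H_{x_0}(a_n(x)) = x_0^n · a_n(x_1/x_0, …, x_m/x_0), is a Stieltjes moment sequence of polynomials in the m+1 variables x_0, x_1, …, x_m. -/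
/-- The homogenization `H_{x₀}(f)` of a polynomial `f` of degree `n` in the
variables `x₁, …, x_m` with respect to a new variable `x₀` (the variable of
index `0`; the old variable `xᵢ` gets index `i` via `Fin.succ`): each monomial
`c ⬝ x₁^{d₁} ⋯ x_m^{d_m}` becomes `c ⬝ x₀^{n - (d₁ + ⋯ + d_m)} x₁^{d₁} ⋯ x_m^{d_m}`. -/
noncomputable def homog {m : ℕ} (n : ℕ) (f : MvPolynomial (Fin m) ℝ) :
    MvPolynomial (Fin (m + 1)) ℝ :=
  ∑ d ∈ f.support,
    MvPolynomial.C (f.coeff d) * (MvPolynomial.X (0 : Fin (m + 1))) ^ (n - ∑ i, d i) *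
      ∏ i : Fin m, (MvPolynomial.X i.succ) ^ d i

/-!
Homogenization is multiplicative up to the degree bookkeeping: if `deg f ≤ n` and `deg g ≤ n'`
then `H_{n+n'}(f g) = H_n(f) H_{n'}(g)`, because the exponent of `x₀` is additive on such
monomials. In a minor of the Hankel matrix with rows `r` and columns `c` the entry `(i, j)` has
degree `r i + c j`, so every term of the Leibniz expansion is homogenized with the same total
weight `∑ r + ∑ c`: the minor of the homogenized matrix is the homogenization of the minor.
Homogenization only moves coefficients to other monomials, so it keeps them nonnegative.
-/

open MvPolynomial

noncomputable def homogExponent {m : ℕ} (n : ℕ) (d : Fin m →₀ ℕ) : Fin (m + 1) →₀ ℕ :=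
  Finsupp.cons (n - d.degree) d

lemma homogExponent_add {m n n' : ℕ} {d e : Fin m →₀ ℕ}
    (hd : d.degree ≤ n) (he : e.degree ≤ n') :
    homogExponent (n + n') (d + e) = homogExponent n d + homogExponent n' e := by
  ext i
  cases i using Fin.cases with
  | zero =>
    simp only [homogExponent, Finsupp.add_apply, Finsupp.cons_zero, map_add]
    omega
  | succ i => simp only [homogExponent, Finsupp.add_apply, Finsupp.cons_succ]

lemma homogExponent_zero {m : ℕ} : homogExponent 0 (0 : Fin m →₀ ℕ) = 0 := by
  simp [homogExponent, Finsupp.cons_zero_zero]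

lemma monomial_homogExponent {m : ℕ} (n : ℕ) (d : Fin m →₀ ℕ) (c : ℝ) :
    monomial (homogExponent n d) c =
      C c * X 0 ^ (n - ∑ i, d i) * ∏ i : Fin m, X i.succ ^ d i := by
  rw [monomial_eq, Finsupp.prod_fintype _ _ (fun _ => pow_zero _), Fin.prod_univ_succ,
    homogExponent, Finsupp.cons_zero, Finsupp.degree_eq_sum, mul_assoc]
  simp only [Finsupp.cons_succ]

lemma homog_eq_sum_monomial {m : ℕ} (n : ℕ) (f : MvPolynomial (Fin m) ℝ) :
    homog n f = ∑ d ∈ f.support, monomial (homogExponent n d) (f.coeff d) := by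
  simp only [homog, monomial_homogExponent]

noncomputable def homogLinear {m : ℕ} (n : ℕ) :
    MvPolynomial (Fin m) ℝ →ₗ[ℝ] MvPolynomial (Fin (m + 1)) ℝ :=
  AddMonoidAlgebra.mapDomainLinearMap ℝ ℝ (homogExponent n)

lemma homogLinear_monomial {m : ℕ} (n : ℕ) (d : Fin m →₀ ℕ) (c : ℝ) :
    homogLinear n (monomial d c) = monomial (homogExponent n d) c :=
  AddMonoidAlgebra.mapDomainLinearMap_single _ _ _

lemma homogLinear_apply {m : ℕ} (n : ℕ) (f : MvPolynomial (Fin m) ℝ) :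
    homogLinear n f = homog n f := by
  conv_lhs => rw [f.as_sum]
  rw [map_sum, homog_eq_sum_monomial]
  simp only [homogLinear_monomial]

lemma homog_monomial {m : ℕ} (n : ℕ) (d : Fin m →₀ ℕ) (c : ℝ) :
    homog n (monomial d c) = monomial (homogExponent n d) c := by
  rw [← homogLinear_apply, homogLinear_monomial]

lemma homog_one {m : ℕ} : homog 0 (1 : MvPolynomial (Fin m) ℝ) = 1 := by
  rw [one_def, homog_monomial, homogExponent_zero, one_def]

lemma homog_mul {m n n' : ℕ} {f g : MvPolynomial (Fin m) ℝ}
    (hf : f.totalDegree ≤ n) (hg : g.totalDegree ≤ n') :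
    homog (n + n') (f * g) = homog n f * homog n' g := by
  conv_lhs => rw [f.as_sum, g.as_sum, Finset.sum_mul_sum]
  conv_rhs => rw [f.as_sum, g.as_sum]
  simp only [← homogLinear_apply, map_sum, homogLinear_monomial, Finset.sum_mul_sum, monomial_mul]
  refine Finset.sum_congr rfl fun d hd => Finset.sum_congr rfl fun e he => ?_
  rw [homogExponent_add ((le_totalDegree hd).trans hf) ((le_totalDegree he).trans hg)]

lemma homog_prod {m : ℕ} {ι : Type*} (s : Finset ι) (n : ι → ℕ)
    (f : ι → MvPolynomial (Fin m) ℝ) (h : ∀ i ∈ s, (f i).totalDegree ≤ n i) :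
    homog (∑ i ∈ s, n i) (∏ i ∈ s, f i) = ∏ i ∈ s, homog (n i) (f i) := by
  classical
  induction s using Finset.cons_induction with
  | empty => simpa using homog_one
  | cons a s ha ih =>
    rw [Finset.prod_cons, Finset.sum_cons, Finset.prod_cons,
      homog_mul (h a (Finset.mem_cons_self a s))
        ((totalDegree_finsetProd s f).trans
          (Finset.sum_le_sum fun i hi => h i (Finset.mem_cons_of_mem hi))),
      ih fun i hi => h i (Finset.mem_cons_of_mem hi)]

lemma det_homog {m : ℕ} {ι : Type*} [Fintype ι] [DecidableEq ι] (w v : ι → ℕ)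
    (A : Matrix ι ι (MvPolynomial (Fin m) ℝ)) (hA : ∀ i j, (A i j).totalDegree ≤ w i + v j) :
    (Matrix.of fun i j => homog (w i + v j) (A i j)).det =
      homog (∑ i, w i + ∑ j, v j) A.det := by
  rw [Matrix.det_apply, Matrix.det_apply, ← homogLinear_apply, map_sum]
  refine Finset.sum_congr rfl fun σ _ => ?_
  have hweight : ∑ i, w i + ∑ j, v j = ∑ i, (w (σ i) + v i) := by
    rw [Finset.sum_add_distrib, Equiv.sum_comp σ w]
  rw [Units.smul_def, Units.smul_def, map_zsmul, homogLinear_apply, hweight,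
    homog_prod _ _ _ fun i _ => hA (σ i) i]
  rfl

lemma PolyNonneg.homog {m : ℕ} {f : MvPolynomial (Fin m) ℝ} (hf : PolyNonneg f) (n : ℕ) :
    PolyNonneg (homog n f) := by
  intro e
  rw [homog_eq_sum_monomial, coeff_sum]
  refine Finset.sum_nonneg fun d _ => ?_
  rw [coeff_monomial]
  split_ifs
  exacts [hf d, le_rfl]

/-- Theorem 2.5: if `(aₙ(x))` is a Stieltjes moment sequence of polynomials with
`deg aₙ = n`, then the sequence of homogenizations is a Stieltjes moment sequence
of polynomials in `m + 1` variables. -/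
theorem homogenization_stieltjes {m : ℕ}
    (a : ℕ → MvPolynomial (Fin m) ℝ)
    (hdeg : ∀ n, (a n).totalDegree = n)
    (hSM : xTP (fun i j => a (i + j))) :
    xTP (fun i j => homog (i + j) (a (i + j))) := by
  intro k r c hr hc
  have hdet := det_homog r c (Matrix.of fun i j => a (r i + c j)) fun i j => (hdeg _).le
  simp only [Matrix.of_apply] at hdet ⊢
  rw [hdet]
  exact (hSM k r c hr hc).homog _
end

section
/- Define polynomials a_{n,k}(q) in ℝ[q] by a_{0,0}(q) = 1, a_{n,k}(q) = 0 unless 0 ≤ k ≤ n, a_{n+1,0}(q) = a_{n,0}(q) + q·a_{n,1}(q), and a_{n+1,k}(q) = a_{n,k−1}(q) + (1+q)·a_{n,k}(q) + q·a_{n,k+1}(q) for 1 ≤ k ≤ n. Then the sequence (a_{n,0}(q))_{n ≥ 0} is a Stieltjes moment sequence of polynomials, i.e., the Hankel matrix [a_{i+j,0}(q)]_{i,j ≥ 0} is q-totally positive. -/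
/-- A real polynomial in one variable `q` is `q`-nonnegative if all of its
coefficients are nonnegative. -/
def QPolyNonneg (f : Polynomial ℝ) : Prop :=
  ∀ i : ℕ, 0 ≤ f.coeff i

/-- An infinite matrix of real polynomials in `q` is `q`-totally positive if
every minor has all nonnegative coefficients. -/
def qTP (M : ℕ → ℕ → Polynomial ℝ) : Prop :=
  ∀ (k : ℕ) (r c : Fin k → ℕ), StrictMono r → StrictMono c →
    QPolyNonneg (Matrix.det (Matrix.of fun i j => M (r i) (c j)))

/-!
The Hankel matrix factors as `H = A D Aᵀ`, where `A = (a n k)` is the lower triangular matrix of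
the recurrence and `D = diag(1, q, q², …)`: the identity `∑ₜ a i t qᵗ a j t = a (i + j) 0` holds
because the tridiagonal production matrix of the recurrence is self-adjoint for the weights `qᵗ`.
That production matrix is a product of two lower bidiagonal matrices with entries in `ℕ[q]`, so
every leading block of `A` is a product of transvections between adjacent indices with
coefficients in `ℕ[q]`. Right multiplication by such a transvection adds a multiple of a column to
an adjacent one, which keeps all minors `q`-nonnegative; hence so does `A D Aᵀ`.
-/

open Polynomial Matrix Finset

def coeffNonneg : Subsemiring ℝ[X] where
  carrier := {f | QPolyNonneg f}
  zero_mem' := fun _ => by simp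
  one_mem' := fun i => by rw [coeff_one]; split_ifs <;> norm_num
  add_mem' := fun hf hg i => by simpa using add_nonneg (hf i) (hg i)
  mul_mem' := fun hf hg i => by
    rw [coeff_mul]
    exact sum_nonneg fun p _ => mul_nonneg (hf p.1) (hg p.2)

theorem X_mem_coeffNonneg : (X : ℝ[X]) ∈ coeffNonneg := fun i => by
  rw [coeff_X]; split_ifs <;> norm_num

theorem StrictMono.update_of_covBy {ι β : Type*} [Preorder ι] [DecidableEq ι] [LinearOrder β]
    {f : ι → β} (hf : StrictMono f) {j : ι} {p : β} (hp : p ∉ Set.range f)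
    (hcov : p ⋖ f j ∨ f j ⋖ p) : StrictMono (Function.update f j p) := by
  intro u v huv
  rcases eq_or_ne u j with rfl | hu <;> rcases eq_or_ne v u with rfl | hv
  · exact absurd huv (lt_irrefl _)
  · rw [Function.update_self, Function.update_of_ne hv]
    rcases hcov with hcov | hcov
    · exact hcov.lt.trans (hf huv)
    · exact (hcov.ge_of_gt (hf huv)).lt_of_ne fun h => hp ⟨v, h.symm⟩
  · exact absurd huv (lt_irrefl _)
  · rcases eq_or_ne v j with rfl | hvj
    · rw [Function.update_self, Function.update_of_ne hu]
      rcases hcov with hcov | hcov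
      · exact (hcov.le_of_lt (hf huv)).lt_of_ne fun h => hp ⟨u, h⟩
      · exact (hf huv).trans hcov.lt
    · rw [Function.update_of_ne hu, Function.update_of_ne hvj]
      exact hf huv

section MinorsIn

variable {R : Type*} [CommRing R] (S : Subsemiring R)

def MinorsIn {m n : Type*} [LinearOrder m] [LinearOrder n] (M : Matrix m n R) : Prop :=
  ∀ (k : ℕ) (r : Fin k → m) (c : Fin k → n), StrictMono r → StrictMono c →
    (M.submatrix r c).det ∈ S

variable {S} {m n : Type*} [LinearOrder m] [LinearOrder n]

theorem minorsIn_one : MinorsIn S (1 : Matrix n n R) := by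
  intro k r c hr hc
  by_cases hrc : r = c
  · subst hrc
    rw [submatrix_one _ hr.injective, det_one]
    exact one_mem S
  by_cases hcol : ∃ j, c j ∉ Set.range r
  · obtain ⟨j, hj⟩ := hcol
    rw [det_eq_zero_of_column_eq_zero j fun i =>
      (one_apply_ne fun h => hj ⟨i, h⟩ : (1 : Matrix n n R) (r i) (c j) = 0)]
    exact zero_mem S
  by_cases hrow : ∃ i, r i ∉ Set.range c
  · obtain ⟨i, hi⟩ := hrow
    rw [det_eq_zero_of_row_eq_zero i fun j =>
      (one_apply_ne fun h => hi ⟨j, h.symm⟩ : (1 : Matrix n n R) (r i) (c j) = 0)]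
    exact zero_mem S
  push Not at hcol hrow
  exact absurd ((hr.range_inj hc).1 (subset_antisymm (Set.range_subset_iff.2 hrow)
    (Set.range_subset_iff.2 hcol))) hrc

variable [Fintype n] {M : Matrix m n R}

theorem MinorsIn.mul_diagonal (hM : MinorsIn S M) {d : n → R} (hd : ∀ i, d i ∈ S) :
    MinorsIn S (M * diagonal d) := by
  intro k r c hr hc
  have : (M * diagonal d).submatrix r c = M.submatrix r c * diagonal (d ∘ c) := by
    ext i j
    simp
  rw [this, det_mul, det_diagonal]
  exact mul_mem (hM k r c hr hc) (prod_mem fun j _ => hd (c j))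

/-- A minor through column `q` gains `a` times the minor with column `q` replaced by column `p`,
whose columns are still increasing because `p` and `q` are adjacent. -/
theorem MinorsIn.mul_transvection (hM : MinorsIn S M) {p q : n} (hpq : p ⋖ q ∨ q ⋖ p) {a : R}
    (ha : a ∈ S) : MinorsIn S (M * transvection p q a) := by
  intro k r c hr hc
  by_cases hq : ∃ j, c j = q
  swap
  · push Not at hq
    have : (M * transvection p q a).submatrix r c = M.submatrix r c := by
      ext i j
      exact mul_transvection_apply_of_ne _ _ _ _ (hq j) _ _
    exact this ▸ hM k r c hr hc
  obtain ⟨j, rfl⟩ := hq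
  have hsplit : (M * transvection p (c j) a).submatrix r c =
      (M.submatrix r c).updateCol j ((fun i => M (r i) (c j)) + a • fun i => M (r i) p) := by
    ext i j'
    rcases eq_or_ne j' j with rfl | hj'
    · simp
    · simp [updateCol_ne hj', mul_transvection_apply_of_ne _ _ _ _ (hc.injective.ne hj')]
  rw [hsplit, det_updateCol_add, det_updateCol_smul,
    show (M.submatrix r c).updateCol j (fun i => M (r i) (c j)) = M.submatrix r c from
      updateCol_eq_self _ _]
  refine add_mem (hM k r c hr hc) (mul_mem ha ?_)
  by_cases hp : p ∈ Set.range c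
  · obtain ⟨j', rfl⟩ := hp
    have hne : j ≠ j' := by
      rintro rfl
      rcases hpq with h | h <;> exact h.lt.ne rfl
    rw [det_zero_of_column_eq hne fun i => by simp [updateCol_ne hne.symm]]
    exact zero_mem S
  · have : (M.submatrix r c).updateCol j (fun i => M (r i) p)
        = M.submatrix r (Function.update c j p) := by
      ext i j'
      rcases eq_or_ne j' j with rfl | hj' <;> simp [*]
    exact this ▸ hM k r _ hr (hc.update_of_covBy hp hpq)

end MinorsIn

section TNSubmonoid

variable {R : Type*} [CommRing R] (S : Subsemiring R) (n : Type*) [Fintype n] [LinearOrder n]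

def tnSubmonoid : Submonoid (Matrix n n R) :=
  Submonoid.closure
    ({A | ∃ p q a, (p ⋖ q ∨ q ⋖ p) ∧ a ∈ S ∧ transvection p q a = A} ∪
      {A | ∃ d, (∀ i, d i ∈ S) ∧ diagonal d = A})

variable {S n}

theorem transvection_mem_tnSubmonoid {p q : n} (hpq : p ⋖ q ∨ q ⋖ p) {a : R} (ha : a ∈ S) :
    transvection p q a ∈ tnSubmonoid S n :=
  Submonoid.subset_closure (Or.inl ⟨p, q, a, hpq, ha, rfl⟩)

theorem diagonal_mem_tnSubmonoid {d : n → R} (hd : ∀ i, d i ∈ S) :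
    diagonal d ∈ tnSubmonoid S n :=
  Submonoid.subset_closure (Or.inr ⟨d, hd, rfl⟩)

theorem MinorsIn.mul_of_mem_tnSubmonoid {m : Type*} [LinearOrder m] {M : Matrix m n R}
    (hM : MinorsIn S M) {A : Matrix n n R} (hA : A ∈ tnSubmonoid S n) :
    MinorsIn S (M * A) := by
  induction hA using Submonoid.closure_induction generalizing M with
  | mem A hA =>
    rcases hA with ⟨p, q, a, hpq, ha, rfl⟩ | ⟨d, hd, rfl⟩
    · exact hM.mul_transvection hpq ha
    · exact hM.mul_diagonal hd
  | one => simpa using hM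
  | mul A B _ _ hA hB => simpa [Matrix.mul_assoc] using hB (hA hM)

theorem minorsIn_of_mem_tnSubmonoid {A : Matrix n n R} (hA : A ∈ tnSubmonoid S n) :
    MinorsIn S A := by
  simpa using minorsIn_one.mul_of_mem_tnSubmonoid hA

theorem transpose_mem_tnSubmonoid {A : Matrix n n R} (hA : A ∈ tnSubmonoid S n) :
    Aᵀ ∈ tnSubmonoid S n := by
  induction hA using Submonoid.closure_induction with
  | mem A hA =>
    rcases hA with ⟨p, q, a, hpq, ha, rfl⟩ | ⟨d, hd, rfl⟩
    · rw [transvection, transpose_add, transpose_one, transpose_single]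
      exact transvection_mem_tnSubmonoid hpq.symm ha
    · rw [diagonal_transpose]
      exact diagonal_mem_tnSubmonoid hd
  | one => simp [one_mem]
  | mul A B _ _ hA hB => simpa using mul_mem hB hA

end TNSubmonoid

section Fin

variable {R : Type*} [CommRing R] {S : Subsemiring R} {N : ℕ}

def blockDiagOne (N : ℕ) : Matrix (Fin N) (Fin N) R →* Matrix (Fin (N + 1)) (Fin (N + 1)) R where
  toFun M := of (Fin.cons (Fin.cons 1 0) fun i => Fin.cons 0 (M i))
  map_one' := by
    ext i j
    cases i using Fin.cases <;> cases j using Fin.cases <;>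
      simp [one_apply, (Fin.succ_ne_zero _).symm]
  map_mul' M M' := by
    ext i j
    cases i using Fin.cases <;> cases j using Fin.cases <;> simp [mul_apply, Fin.sum_univ_succ]

theorem blockDiagOne_transvection (p q : Fin N) (a : R) :
    blockDiagOne N (transvection p q a) = transvection p.succ q.succ a := by
  ext i j
  cases i using Fin.cases <;> cases j using Fin.cases <;>
    simp [blockDiagOne, transvection, one_apply, single_apply, (Fin.succ_ne_zero _).symm]

theorem blockDiagOne_diagonal (d : Fin N → R) :
    blockDiagOne N (diagonal d) = diagonal (Fin.cons 1 d) := by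
  ext i j
  cases i using Fin.cases <;> cases j using Fin.cases <;>
    simp [blockDiagOne, diagonal_apply, (Fin.succ_ne_zero _).symm]

theorem blockDiagOne_mem_tnSubmonoid {M : Matrix (Fin N) (Fin N) R}
    (hM : M ∈ tnSubmonoid S (Fin N)) : blockDiagOne N M ∈ tnSubmonoid S (Fin (N + 1)) := by
  suffices tnSubmonoid S (Fin N) ≤ (tnSubmonoid S (Fin (N + 1))).comap (blockDiagOne N) from
    this hM
  refine Submonoid.closure_le.2 ?_
  rintro _ (⟨p, q, a, hpq, ha, rfl⟩ | ⟨d, hd, rfl⟩)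
  · rw [SetLike.mem_coe, Submonoid.mem_comap, blockDiagOne_transvection]
    exact transvection_mem_tnSubmonoid (by simpa [Fin.covBy_iff] using hpq) ha
  · rw [SetLike.mem_coe, Submonoid.mem_comap, blockDiagOne_diagonal]
    exact diagonal_mem_tnSubmonoid (Fin.cases (one_mem S) hd)

def lowerBidiag (N : ℕ) (g : ℕ → R) : Matrix (Fin N) (Fin N) R :=
  of fun i j => if i = j then 1 else if (i : ℕ) = j + 1 then g i else 0

theorem lowerBidiag_succ_succ (g : ℕ → R) :
    lowerBidiag (N + 2) g =
      transvection 1 0 (g 1) * blockDiagOne (N + 1) (lowerBidiag (N + 1) fun n => g (n + 1)) := by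
  ext i j
  cases i using Fin.cases with
  | zero =>
    cases j using Fin.cases <;>
      simp [lowerBidiag, blockDiagOne, (Fin.succ_ne_zero _).symm]
  | succ i =>
    cases i using Fin.cases with
    | zero =>
      rw [Fin.succ_zero_eq_one, transvection_mul_apply_same]
      cases j using Fin.cases <;>
        simp [lowerBidiag, blockDiagOne, ← Fin.succ_zero_eq_one, -Fin.succ_zero_eq_one']
    | succ i =>
      rw [transvection_mul_apply_of_ne _ _ _ _ (Fin.succ_succ_ne_one i)]
      cases j using Fin.cases <;> simp [lowerBidiag, blockDiagOne]

theorem lowerBidiag_mem_tnSubmonoid : ∀ {N : ℕ} {g : ℕ → R}, (∀ n, g n ∈ S) →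
    lowerBidiag N g ∈ tnSubmonoid S (Fin N)
  | 0, g, _ => by simp [Subsingleton.elim (lowerBidiag 0 g) 1, one_mem]
  | 1, g, _ => by
    rw [show lowerBidiag 1 g = 1 by ext i j; fin_cases i; fin_cases j; simp [lowerBidiag]]
    exact one_mem _
  | N + 2, g, hg => by
    rw [lowerBidiag_succ_succ]
    exact mul_mem (transvection_mem_tnSubmonoid (Or.inr (by simp [Fin.covBy_iff])) (hg 1))
      (blockDiagOne_mem_tnSubmonoid (lowerBidiag_mem_tnSubmonoid fun n => hg (n + 1)))

end Fin

section Triangle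

variable {R : Type*} [CommRing R]

def leadingBlock (N : ℕ) (b : ℕ → ℕ → R) : Matrix (Fin N) (Fin N) R :=
  of fun i j => b i j

theorem leadingBlock_mul_lowerBidiag {N : ℕ} {b : ℕ → ℕ → R} (hb : ∀ i j, i < j → b i j = 0)
    (g : ℕ → R) :
    leadingBlock N b * lowerBidiag N g =
      leadingBlock N fun i j => b i j + b i (j + 1) * g (j + 1) := by
  ext i j
  have hL : ∀ k : Fin N, lowerBidiag N g k j =
      (if k = j then 1 else 0) + if (k : ℕ) = j + 1 then g k else 0 := by
    intro k
    by_cases hk : k = j <;> simp [lowerBidiag, hk]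
  simp only [mul_apply, hL, mul_add, mul_ite, mul_one, mul_zero, sum_add_distrib, sum_ite_eq',
    mem_univ, if_true, leadingBlock, of_apply]
  congr 1
  rw [Fin.sum_univ_eq_sum_range (fun k => if k = j + 1 then b i k * g k else 0), sum_ite_eq']
  split_ifs with h
  · rfl
  · rw [hb i (j + 1) (by simp at h; omega), zero_mul]

structure IsMotzkinTriangle (c : R) (a : ℕ → ℕ → R) : Prop where
  zero_zero : a 0 0 = 1
  eq_zero_of_lt : ∀ n k, n < k → a n k = 0
  succ_zero : ∀ n, a (n + 1) 0 = a n 0 + c * a n 1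
  succ_succ : ∀ n k, a (n + 1) (k + 1) = a n k + (1 + c) * a n (k + 1) + c * a n (k + 2)

def padOne (a : ℕ → ℕ → R) : ℕ → ℕ → R
  | 0, 0 => 1
  | 0, _ + 1 => 0
  | _ + 1, 0 => 0
  | i + 1, j + 1 => a i j

theorem blockDiagOne_leadingBlock (N : ℕ) (a : ℕ → ℕ → R) :
    blockDiagOne N (leadingBlock N a) = leadingBlock (N + 1) (padOne a) := by
  ext i j
  cases i using Fin.cases <;> cases j using Fin.cases <;> simp [blockDiagOne, leadingBlock, padOne]

variable {c : R} {a : ℕ → ℕ → R}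

/-- `A_{N+1} = (1 ⊕ A_N) P`, where `P` has first row `e₀` followed by the rows of the tridiagonal
production matrix (subdiagonal `c`, diagonal `1, 1 + c, 1 + c, …`, superdiagonal `1`); this `P` is
the product of the two lower bidiagonal matrices below. -/
theorem IsMotzkinTriangle.leadingBlock_succ (ha : IsMotzkinTriangle c a) (N : ℕ) :
    leadingBlock (N + 1) a = blockDiagOne N (leadingBlock N a) *
      lowerBidiag (N + 1) (fun n => if 2 ≤ n then c else 0) * lowerBidiag (N + 1) fun _ => 1 := by
  have hpad : ∀ i j, i < j → padOne a i j = 0 := by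
    rintro (_ | i) (_ | j) h <;> simp_all [padOne, ha.eq_zero_of_lt]
  rw [blockDiagOne_leadingBlock, leadingBlock_mul_lowerBidiag hpad,
    leadingBlock_mul_lowerBidiag fun i j h => by simp [hpad i j h, hpad i (j + 1) (by omega)]]
  ext i j
  rcases i with ⟨_ | i, hi⟩ <;> rcases j with ⟨_ | j, hj⟩
  · simp [leadingBlock, padOne, ha.zero_zero]
  · simp [leadingBlock, padOne, ha.eq_zero_of_lt]
  · simp [leadingBlock, padOne, ha.succ_zero, mul_comm]
  · simp [leadingBlock, padOne, ha.succ_succ]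
    ring

theorem IsMotzkinTriangle.leadingBlock_mem_tnSubmonoid {S : Subsemiring R}
    (ha : IsMotzkinTriangle c a) (hc : c ∈ S) :
    ∀ N, leadingBlock N a ∈ tnSubmonoid S (Fin N)
  | 0 => by simp [Subsingleton.elim (leadingBlock 0 a) 1, one_mem]
  | N + 1 => by
    rw [ha.leadingBlock_succ]
    refine mul_mem (mul_mem (blockDiagOne_mem_tnSubmonoid (ha.leadingBlock_mem_tnSubmonoid hc N))
      (lowerBidiag_mem_tnSubmonoid fun n => ?_)) (lowerBidiag_mem_tnSubmonoid fun _ => one_mem S)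
    split_ifs
    exacts [hc, zero_mem S]

end Triangle

section Hankel

variable {R : Type*} [CommRing R] {c : R} {a : ℕ → ℕ → R}

/-- The production matrix is self-adjoint for the weights `c ^ t`. -/
theorem IsMotzkinTriangle.sum_succ_mul_pow_mul (ha : IsMotzkinTriangle c a) {N i j : ℕ}
    (hi : i < N) (hj : j < N) :
    ∑ t ∈ range N, a (i + 1) t * c ^ t * a j t = ∑ t ∈ range N, a i t * c ^ t * a (j + 1) t := by
  obtain ⟨M, rfl⟩ : ∃ M, N = M + 1 := ⟨N - 1, by omega⟩
  have expand : ∀ n < M + 1, ∀ v : ℕ → R, ∑ t ∈ range (M + 1), a (n + 1) t * c ^ t * v t =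
      a n 0 * v 0 + ∑ t ∈ range M, (a n (t + 1) * c ^ (t + 1) * v t +
        a n t * c ^ (t + 1) * v (t + 1) + (1 + c) * a n (t + 1) * c ^ (t + 1) * v (t + 1)) := by
    intro n hn v
    have shift := (sum_range_succ' (fun t => a n (t + 1) * c ^ (t + 1) * v t) M).symm.trans
      (sum_range_succ (fun t => a n (t + 1) * c ^ (t + 1) * v t) M)
    rw [ha.eq_zero_of_lt n (M + 1) hn, zero_mul, zero_mul, add_zero] at shift
    have hterm : ∀ t, a (n + 1) (t + 1) * c ^ (t + 1) * v (t + 1) =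
        a n t * c ^ (t + 1) * v (t + 1) + (1 + c) * a n (t + 1) * c ^ (t + 1) * v (t + 1) +
          a n (t + 1 + 1) * c ^ (t + 1 + 1) * v (t + 1) := fun t => by
      rw [ha.succ_succ]; ring
    rw [sum_range_succ', ha.succ_zero]
    simp only [hterm, sum_add_distrib]
    linear_combination shift
  calc ∑ t ∈ range (M + 1), a (i + 1) t * c ^ t * a j t
      = ∑ t ∈ range (M + 1), a (j + 1) t * c ^ t * a i t := by
        rw [expand i hi, expand j hj]
        congr 1
        · ring
        · exact sum_congr rfl fun t _ => by ring
    _ = ∑ t ∈ range (M + 1), a i t * c ^ t * a (j + 1) t :=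
        sum_congr rfl fun t _ => by ring

theorem IsMotzkinTriangle.sum_mul_pow_mul (ha : IsMotzkinTriangle c a) (i : ℕ) :
    ∀ {N j : ℕ}, i < N → j < N → ∑ t ∈ range N, a i t * c ^ t * a j t = a (i + j) 0 := by
  induction i with
  | zero =>
    intro N j hN _
    rw [sum_eq_single_of_mem 0 (mem_range.2 hN) fun t _ ht =>
      by rw [ha.eq_zero_of_lt 0 t (Nat.pos_of_ne_zero ht), zero_mul, zero_mul]]
    simp [ha.zero_zero]
  | succ i ih =>
    intro N j hi hj
    have hextend : ∑ t ∈ range N, a i t * c ^ t * a (j + 1) t =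
        ∑ t ∈ range (N + 1), a i t * c ^ t * a (j + 1) t := by
      rw [sum_range_succ, ha.eq_zero_of_lt i N (by omega), zero_mul, zero_mul, add_zero]
    rw [ha.sum_succ_mul_pow_mul (by omega) hj, hextend, ih (by omega) (by omega),
      Nat.add_right_comm, Nat.add_assoc]

theorem IsMotzkinTriangle.leadingBlock_hankel (ha : IsMotzkinTriangle c a) (N : ℕ) :
    leadingBlock N (fun i j => a (i + j) 0) =
      leadingBlock N a * diagonal (fun t : Fin N => c ^ (t : ℕ)) * (leadingBlock N a)ᵀ := by
  ext i j
  rw [mul_apply]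
  simp only [mul_diagonal, leadingBlock, transpose_apply, of_apply]
  rw [Fin.sum_univ_eq_sum_range (fun t => a i t * c ^ t * a j t), ha.sum_mul_pow_mul i i.2 j.2]

end Hankel

theorem qTP_of_minorsIn_leadingBlock {M : ℕ → ℕ → ℝ[X]}
    (hM : ∀ N, MinorsIn coeffNonneg (leadingBlock N M)) : qTP M := by
  intro k r c hr hc
  set N := univ.sup r + univ.sup c + 1
  have hrN : ∀ i, r i < N := fun i => by have := le_sup (f := r) (mem_univ i); omega
  have hcN : ∀ j, c j < N := fun j => by have := le_sup (f := c) (mem_univ j); omega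
  exact hM N k (fun i => ⟨r i, hrN i⟩) (fun j => ⟨c j, hcN j⟩) (fun _ _ h => hr h)
    (fun _ _ h => hc h)

/-- Example 3.1: the `q`-analogue of the Catalan numbers coming from Motzkin
paths with level-steps weighted `1` at level `0` and `1 + q` at positive levels
and down-steps weighted `q` is a Stieltjes moment sequence of polynomials. -/
theorem example31_stieltjes
    (a : ℕ → ℕ → Polynomial ℝ)
    (h00 : a 0 0 = 1)
    (hzero : ∀ n k, n < k → a n k = 0)
    (hrec0 : ∀ n, a (n + 1) 0 = a n 0 + Polynomial.X * a n 1)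
    (hrec : ∀ n k, a (n + 1) (k + 1) =
      a n k + (1 + Polynomial.X) * a n (k + 1) + Polynomial.X * a n (k + 2)) :
    qTP (fun i j => a (i + j) 0) := by
  have ha : IsMotzkinTriangle X a := ⟨h00, hzero, hrec0, hrec⟩
  refine qTP_of_minorsIn_leadingBlock fun N => ?_
  have hA := ha.leadingBlock_mem_tnSubmonoid X_mem_coeffNonneg N
  rw [ha.leadingBlock_hankel]
  exact minorsIn_of_mem_tnSubmonoid <| mul_mem (mul_mem hA <| diagonal_mem_tnSubmonoid fun t =>
    pow_mem X_mem_coeffNonneg _) (transpose_mem_tnSubmonoid hA)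
end
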